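/- For the perturbed collapsed walk U' and the unit vector |ψ₁⟩ = (1/c) Σ_{x=0}^{n/2−1} (1/√(2C(n−1,x))) (|R,x⟩ − |L,x+1⟩) with c² = Σ_{x=0}^{n/2−1} 1/C(n−1,x), one has ⟨ψ₁|U'|ψ₁⟩ = 1 − 1/(2c² C(n−1, n/2)). -/

import Mathlib

open Matrix

/-- `cos ω_x = 1 - 2x/n`. -/
noncomputable def cosOmega (n x : ℕ) : ℝ := 1 - 2 * x / n

/-- `sin ω_x = (2/n)√(x(n-x))`. -/
noncomputable def sinOmega (n x : ℕ) : ℝ := (2 / n) * Real.sqrt (x * ((n : ℝ) - x))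

/-- The collapsed (line) walk operator, on the basis `|R,x⟩ = (false, x)`,
`|L,x⟩ = (true, x)`. -/
noncomputable def collapsedU (n : ℕ) :
    Matrix (Bool × Fin (n + 1)) (Bool × Fin (n + 1)) ℂ :=
  Matrix.of fun p q =>
    if p.1 = false ∧ q.1 = true ∧ (q.2 : ℕ) = (p.2 : ℕ) + 1 then (-(cosOmega n q.2) : ℝ)
    else if p.1 = false ∧ q.1 = false ∧ (q.2 : ℕ) = (p.2 : ℕ) + 1 then (sinOmega n q.2 : ℝ)
    else if p.1 = true ∧ q.1 = true ∧ (q.2 : ℕ) + 1 = (p.2 : ℕ) then (sinOmega n q.2 : ℝ)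
    else if p.1 = true ∧ q.1 = false ∧ (q.2 : ℕ) + 1 = (p.2 : ℕ) then (cosOmega n q.2 : ℝ)
    else 0

/-- The perturbed collapsed walk operator `U' = U − 2|L,1⟩⟨R,0|`. -/
noncomputable def collapsedU' (n : ℕ) :
    Matrix (Bool × Fin (n + 1)) (Bool × Fin (n + 1)) ℂ :=
  collapsedU n -
    (2 : ℂ) • Matrix.of fun p q =>
      if p = (true, (1 : Fin (n + 1))) ∧ q = (false, (0 : Fin (n + 1))) then 1 else 0

/-- The square `c²` of the normalization constant:
`c² = Σ_{x=0}^{n/2−1} 1/C(n−1,x)`. -/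
noncomputable def cSq (n : ℕ) : ℝ :=
  ∑ x ∈ Finset.range (n / 2), (1 : ℝ) / ((n - 1).choose x)

/-- The second approximate eigenvector
`|ψ₁⟩ = (1/c) Σ_{x=0}^{n/2−1} (1/√(2C(n−1,x))) (|R,x⟩ − |L,x+1⟩)`. -/
noncomputable def linePsi1 (n : ℕ) : Bool × Fin (n + 1) → ℂ :=
  fun p =>
    if p.1 = false ∧ (p.2 : ℕ) < n / 2 then
      ((1 / (Real.sqrt (cSq n) * Real.sqrt (2 * (n - 1).choose p.2))) : ℝ)
    else if p.1 = true ∧ 1 ≤ (p.2 : ℕ) ∧ (p.2 : ℕ) ≤ n / 2 then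
      (-(1 / (Real.sqrt (cSq n) * Real.sqrt (2 * (n - 1).choose ((p.2 : ℕ) - 1)))) : ℝ)
    else 0

/-!
Write `ψ₁ = ∑ₓ aₓ eₓ` with `eₓ = |R,x⟩ - |L,x+1⟩`. Between these vectors `U'` is tridiagonal:
`sin ω_{x+1}` off the diagonal, `cos ω_{x+1} - cos ω_x = -2/n` on it, plus `2` at `(0,0)` from the
perturbation. Since `(x+1) C(n-1,x+1) = (n-1-x) C(n-1,x)`, the square roots in
`aₓ a_{x+1} sin ω_{x+1}` cancel, leaving `(x+1) / (n c² C(n-1,x))`; the resulting sum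
`∑ (x+1)/C(n-1,x)` is evaluated by telescoping `(N+1-x)/C(N,x)` with `N = n-1`.
-/

open Finset Fin.NatCast

lemma cast_choose_succ_mul {N x : ℕ} (hx : x ≤ N) :
    (N.choose (x + 1) : ℝ) * (x + 1) = N.choose x * (N - x) := by
  rw [← Nat.cast_sub hx]
  exact_mod_cast Nat.choose_succ_right_eq N x

lemma sum_range_sub_two_mul_div_choose {N k : ℕ} (hk : k ≤ N) :
    ∑ x ∈ range k, ((N : ℝ) - 2 * x) / N.choose x = N + 1 - (N + 1 - k) / N.choose k := by
  let g : ℕ → ℝ := fun x => (N + 1 - x) / N.choose x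
  have hstep : ∀ x < N, g x - g (x + 1) = ((N : ℝ) - 2 * x) / N.choose x := fun x hx => by
    have hC : (N.choose x : ℝ) ≠ 0 := by exact_mod_cast (Nat.choose_pos hx.le).ne'
    have hC' : (N.choose (x + 1) : ℝ) ≠ 0 := by exact_mod_cast (Nat.choose_pos hx).ne'
    have hrec := cast_choose_succ_mul hx.le
    simp only [g]
    push_cast
    field_simp
    linear_combination hrec
  rw [← sum_congr rfl fun x hx => hstep x (by have := mem_range.1 hx; omega), sum_range_sub']
  simp [g]

-- Casting `x : ℕ` into `Fin (n + 1)` wraps around modulo `n + 1`; the lemmas below keep `x ≤ n`.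
noncomputable def lineKet (n : ℕ) (b : Bool) (x : ℕ) : Bool × Fin (n + 1) → ℂ :=
  Pi.single (b, (x : Fin (n + 1))) 1

noncomputable def edgeVec (n x : ℕ) : Bool × Fin (n + 1) → ℂ :=
  lineKet n false x - lineKet n true (x + 1)

noncomputable def edgeForm (n x y : ℕ) : ℝ :=
  (if y = x + 1 then sinOmega n y else 0) + (if x = y + 1 then sinOmega n x else 0)
    + (if x = y then cosOmega n (x + 1) - cosOmega n x else 0) + (if x = 0 ∧ y = 0 then 2 else 0)

noncomputable def psi1Amp (n x : ℕ) : ℝ :=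
  1 / (Real.sqrt (cSq n) * Real.sqrt (2 * (n - 1).choose x))

lemma lineKet_apply (n : ℕ) (b : Bool) {x : ℕ} (hx : x ≤ n) (p : Bool × Fin (n + 1)) :
    lineKet n b x p = if p.1 = b ∧ (p.2 : ℕ) = x then 1 else 0 := by
  obtain ⟨b', i⟩ := p
  simp only [lineKet, Pi.single_apply, Prod.mk.injEq, Fin.ext_iff,
    Fin.val_cast_of_lt (Nat.lt_succ_of_le hx)]

lemma edgeVec_dotProduct_mulVec (n : ℕ) {x y : ℕ} (hx : x < n) (hy : y < n) :
    edgeVec n x ⬝ᵥ collapsedU' n *ᵥ edgeVec n y = edgeForm n x y := by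
  have h1 : ((1 : Fin (n + 1)) : ℕ) = 1 := (Fin.val_one' _).trans (Nat.mod_eq_of_lt (by omega))
  have hx0 := Fin.val_cast_of_lt (Nat.lt_succ_of_le hx.le)
  have hy0 := Fin.val_cast_of_lt (Nat.lt_succ_of_le hy.le)
  have hx1 := Fin.val_cast_of_lt (Nat.succ_lt_succ hx)
  have hy1 := Fin.val_cast_of_lt (Nat.succ_lt_succ hy)
  simp only [edgeVec, lineKet, mulVec_sub, sub_dotProduct, dotProduct_sub, mulVec_single_one,
    single_dotProduct, one_mul, col_apply]
  simp only [collapsedU', collapsedU, Matrix.sub_apply, Matrix.smul_apply, Matrix.of_apply,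
    Prod.mk.injEq, Fin.ext_iff, h1, hx0, hy0, hx1, hy1, Fin.val_zero]
  simp only [Bool.false_eq_true, Bool.true_eq_false, false_and, and_false, true_and, and_self,
    if_false, smul_eq_mul, mul_zero, mul_one, mul_ite, sub_zero, Nat.succ_eq_add_one,
    Nat.add_right_cancel_iff, Nat.add_eq_right, Nat.add_eq_zero_iff, one_ne_zero, edgeForm]
  split_ifs <;> first | omega | (subst_vars; push_cast; ring)

lemma star_linePsi1 (n : ℕ) : star (linePsi1 n) = linePsi1 n := by
  funext p
  simp only [Pi.star_apply, linePsi1]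
  split_ifs <;> simp

lemma linePsi1_eq_sum (n : ℕ) :
    linePsi1 n = ∑ x ∈ range (n / 2), (psi1Amp n x : ℂ) • edgeVec n x := by
  funext ⟨b, i⟩
  have hle : ∀ x ∈ range (n / 2), x + 1 ≤ n := fun x hx => by have := mem_range.1 hx; omega
  rw [Finset.sum_apply, sum_congr rfl fun x hx => by
    rw [Pi.smul_apply, edgeVec, Pi.sub_apply, lineKet_apply n false (by have := hle x hx; omega),
      lineKet_apply n true (hle x hx)]]
  have hi : ∀ x, (i : ℕ) = x + 1 ↔ 1 ≤ (i : ℕ) ∧ x = i - 1 := by omega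
  have hi' : 1 ≤ (i : ℕ) → ((i : ℕ) - 1 < n / 2 ↔ (i : ℕ) ≤ n / 2) := by omega
  cases b
  · simp [linePsi1, psi1Amp]
  · simp +contextual [linePsi1, psi1Amp, hi, ite_and, hi', neg_ite]

lemma linePsi1_expectation_eq_sum (n : ℕ) :
    star (linePsi1 n) ⬝ᵥ collapsedU' n *ᵥ linePsi1 n
      = ((∑ x ∈ range (n / 2), ∑ y ∈ range (n / 2),
          psi1Amp n x * psi1Amp n y * edgeForm n x y : ℝ) : ℂ) := by
  have hlt : ∀ x ∈ range (n / 2), x < n := fun x hx => by have := mem_range.1 hx; omega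
  rw [star_linePsi1, linePsi1_eq_sum]
  simp only [mulVec_sum, mulVec_smul, dotProduct_sum, sum_dotProduct, smul_dotProduct,
    dotProduct_smul, smul_eq_mul, Complex.ofReal_sum, mul_sum]
  rw [sum_comm]
  refine sum_congr rfl fun x hx => sum_congr rfl fun y hy => ?_
  rw [edgeVec_dotProduct_mulVec n (hlt x hx) (hlt y hy)]
  push_cast
  ring

lemma sum_range_succ_ite_lt (k : ℕ) (f : ℕ → ℝ) :
    ∑ x ∈ range (k + 1), (if x < k then f x else 0) = ∑ x ∈ range k, f x := by
  rw [sum_range_succ, if_neg (lt_irrefl k), add_zero]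
  exact sum_congr rfl fun x hx => if_pos (mem_range.1 hx)

lemma sum_sum_mul_edgeForm (n k : ℕ) (a : ℕ → ℝ) :
    ∑ x ∈ range (k + 1), ∑ y ∈ range (k + 1), a x * a y * edgeForm n x y
      = 2 * ∑ x ∈ range k, a x * a (x + 1) * sinOmega n (x + 1)
        + ∑ x ∈ range (k + 1), a x ^ 2 * (cosOmega n (x + 1) - cosOmega n x) + 2 * a 0 ^ 2 := by
  simp only [edgeForm, mul_add, sum_add_distrib, mul_ite, mul_zero]
  rw [sum_comm (f := fun x y => if x = y + 1 then _ else _)]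
  simp only [sum_ite_eq, sum_ite_eq', sum_ite_mem, inter_self, ite_and, sum_ite_irrel,
    sum_const_zero]
  simp only [mem_range, Nat.add_lt_add_iff_right, sum_range_succ_ite_lt, Nat.zero_lt_succ, if_true]
  have hswap : ∑ x ∈ range k, a (x + 1) * a x * sinOmega n (x + 1)
      = ∑ x ∈ range k, a x * a (x + 1) * sinOmega n (x + 1) := sum_congr rfl fun x _ => by ring
  simp only [hswap, ← pow_two]
  ring

lemma cSq_pos {n : ℕ} (hn : 2 ≤ n) : 0 < cSq n :=
  sum_pos (fun x hx => by
      have := Nat.choose_pos (show x ≤ n - 1 by have := mem_range.1 hx; omega)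
      positivity)
    ⟨0, mem_range.2 (by omega)⟩

lemma psi1Amp_sq (n x : ℕ) : psi1Amp n x ^ 2 = 1 / (2 * cSq n * (n - 1).choose x) := by
  have hc : 0 ≤ cSq n := sum_nonneg fun x _ => by positivity
  rw [psi1Amp, div_pow, mul_pow, Real.sq_sqrt hc, Real.sq_sqrt (by positivity)]
  ring

lemma sum_psi1Amp_sq {n : ℕ} (hn : 2 ≤ n) : ∑ x ∈ range (n / 2), psi1Amp n x ^ 2 = 1 / 2 := by
  have hc := (cSq_pos hn).ne'
  have hsplit : ∀ x, 1 / (2 * cSq n * (n - 1).choose x)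
      = 1 / (2 * cSq n) * (1 / (n - 1).choose x) := fun x => by ring
  simp only [psi1Amp_sq, hsplit, ← mul_sum]
  change 1 / (2 * cSq n) * cSq n = 1 / 2
  field_simp

lemma cosOmega_succ_sub (n x : ℕ) : cosOmega n (x + 1) - cosOmega n x = -2 / n := by
  simp only [cosOmega]
  push_cast
  ring

lemma psi1Amp_mul_psi1Amp_succ_mul_sinOmega {n x : ℕ} (hx : x + 2 ≤ n) :
    psi1Amp n x * psi1Amp n (x + 1) * sinOmega n (x + 1)
      = (x + 1) / (n - 1).choose x / (n * cSq n) := by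
  have hc := cSq_pos (show 2 ≤ n by omega)
  have hC : (0 : ℝ) < (n - 1).choose x := by exact_mod_cast Nat.choose_pos (by omega)
  have hC' : (0 : ℝ) < (n - 1).choose (x + 1) := by exact_mod_cast Nat.choose_pos (by omega)
  have hn : (0 : ℝ) < n := by exact_mod_cast (show 0 < n by omega)
  have hsin : sinOmega n (x + 1) ^ 2 = 4 / n ^ 2 * ((x + 1) * (n - (x + 1))) := by
    have : ((x + 1 : ℕ) : ℝ) ≤ n := by exact_mod_cast (show x + 1 ≤ n by omega)
    rw [sinOmega, mul_pow, Real.sq_sqrt (mul_nonneg (Nat.cast_nonneg _) (sub_nonneg.2 this))]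
    push_cast
    ring
  have hrec := cast_choose_succ_mul (show x ≤ n - 1 by omega)
  push_cast [Nat.cast_sub (show 1 ≤ n by omega)] at hrec
  -- both sides are nonnegative, so it suffices to compare their squares
  refine (pow_left_inj₀ (by unfold psi1Amp sinOmega; positivity) (by positivity) two_ne_zero).1 ?_
  rw [mul_pow, mul_pow, psi1Amp_sq, psi1Amp_sq, hsin]
  field_simp
  linear_combination -4 * hrec

lemma two_mul_sum_succ_div_choose (k : ℕ) :
    2 * ∑ x ∈ range k, ((x : ℝ) + 1) / (2 * k + 1).choose x
      = (2 * k + 3) * cSq (2 * k + 2) - (2 * k + 2) - (k + 1) / (2 * k + 1).choose (k + 1) := by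
  have hc : cSq (2 * k + 2)
      = ∑ x ∈ range k, 1 / ((2 * k + 1).choose x : ℝ) + 1 / (2 * k + 1).choose (k + 1) := by
    rw [cSq, show (2 * k + 2) / 2 = k + 1 by omega, show 2 * k + 2 - 1 = 2 * k + 1 by omega,
      sum_range_succ, Nat.choose_symm_half]
  have htel := sum_range_sub_two_mul_div_choose (show k ≤ 2 * k + 1 by omega)
  have hsplit : ∑ x ∈ range k, (((2 * k + 1 : ℕ) : ℝ) - 2 * x) / (2 * k + 1).choose x
      = (2 * k + 3) * ∑ x ∈ range k, 1 / ((2 * k + 1).choose x : ℝ)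
        - 2 * ∑ x ∈ range k, ((x : ℝ) + 1) / (2 * k + 1).choose x := by
    rw [mul_sum, mul_sum, ← sum_sub_distrib]
    exact sum_congr rfl fun x _ => by push_cast; ring
  rw [← Nat.choose_symm_half] at htel
  push_cast at htel hsplit
  linear_combination hsplit - htel - (2 * k + 3) * hc

/-- `⟨ψ₁|U'|ψ₁⟩ = 1 − 1/(2c² C(n−1, n/2))`. -/
theorem psi1_expectation (n : ℕ) (hn : 2 ≤ n) (heven : Even n) :
    star (linePsi1 n) ⬝ᵥ (collapsedU' n).mulVec (linePsi1 n)
      = 1 - 1 / (2 * (cSq n : ℂ) * ((n - 1).choose (n / 2) : ℂ)) := by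
  obtain ⟨k, rfl⟩ : ∃ k, n = 2 * k + 2 := by obtain ⟨m, rfl⟩ := heven; exact ⟨m - 1, by omega⟩
  have hc := (cSq_pos hn).ne'
  have hC : ((2 * k + 1).choose (k + 1) : ℝ) ≠ 0 := by exact_mod_cast (Nat.choose_pos (by omega)).ne'
  have hhalf : (2 * k + 2) / 2 = k + 1 := by omega
  have hnorm := sum_psi1Amp_sq hn
  rw [hhalf] at hnorm
  rw [linePsi1_expectation_eq_sum, hhalf, sum_sum_mul_edgeForm,
    sum_congr rfl fun x hx => psi1Amp_mul_psi1Amp_succ_mul_sinOmega (by have := mem_range.1 hx; omega),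
    ← sum_div]
  simp only [cosOmega_succ_sub, ← sum_mul]
  rw [hnorm, psi1Amp_sq, show 2 * k + 2 - 1 = 2 * k + 1 by omega, mul_div_assoc',
    two_mul_sum_succ_div_choose, Nat.choose_zero_right]
  rw [show (1 : ℂ) - 1 / (2 * (cSq (2 * k + 2) : ℂ) * ((2 * k + 1).choose (k + 1) : ℂ))
      = ((1 - 1 / (2 * cSq (2 * k + 2) * (2 * k + 1).choose (k + 1)) : ℝ) : ℂ) by push_cast; ring]
  congr 1
  push_cast
  field_simp
  ring
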